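/- arXiv:2003.13621 — 4 statements merged into one kernel-verified Lean document; each statement's English description precedes it below -/
import Mathlib

section
/- Let I be a finite index set, let M = (M_{ij})_{i,j∈I} be an integer matrix, and let D = diag(d_i)_{i∈I} be a diagonal integer matrix with d_i > 0 for all i such that MD is skew-symmetric, i.e. M_{ij}·d_j = −M_{ji}·d_i for all i,j ∈ I. Then for every k ∈ I, the matrix D is also a skew-symmetrizer of the mutated matrix μ_k(M); that is, μ_k(M)_{ij}·d_j = −μ_k(M)_{ji}·d_i for all i,j ∈ I. -/
/-- Matrix mutation in direction `k`. -/
def matrixMutation {I : Type*} [DecidableEq I] (M : I → I → ℤ) (k : I) : I → I → ℤ :=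
  fun i j =>
    if k = i ∨ k = j then -M i j
    else M i j + max (M i k) 0 * max (M k j) 0 - max (-M i k) 0 * max (-M k j) 0

/-- If `D = diag(d_i)` with positive integer entries is a skew-symmetrizer of the integer
matrix `M` (i.e. `MD = -(MD)ᵀ`), then `D` is also a skew-symmetrizer of the mutated matrix
`μ_k(M)`, for every direction `k`. -/
theorem mutation_preserves_skew_symmetrizer
    {I : Type*} [Fintype I] [DecidableEq I]
    (M : I → I → ℤ) (d : I → ℤ) (hd : ∀ i, 0 < d i)
    (hskew : ∀ i j, M i j * d j = -(M j i * d i)) (k : I) :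
    ∀ i j, matrixMutation M k i j * d j = -(matrixMutation M k j i * d i) := by
  intro i j
  unfold matrixMutation
  by_cases h : k = i ∨ k = j
  · have h' : k = j ∨ k = i := h.symm
    simp only [if_pos h, if_pos h', neg_mul, neg_neg]
    linarith [hskew i j]
  · have h' : ¬ (k = j ∨ k = i) := by tauto
    simp only [if_neg h, if_neg h']
    have hik := hskew i k
    have hki := hskew k i
    have hkj := hskew k j
    have hjk := hskew j k
    have hij := hskew i j
    have hdk := hd k
    have hdi := hd i
    have hdj := hd j
    rcases le_or_gt (M i k) 0 with h1 | h1
    · have h1' : 0 ≤ M k i := by nlinarith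
      rcases le_or_gt (M k j) 0 with h2 | h2
      · have h2' : 0 ≤ M j k := by nlinarith
        rw [max_eq_right h1, max_eq_left (by linarith : (0:ℤ) ≤ -M i k),
          max_eq_right h2, max_eq_left (by linarith : (0:ℤ) ≤ -M k j),
          max_eq_left h2', max_eq_left h1',
          max_eq_right (by linarith : -M j k ≤ 0), max_eq_right (by linarith : -M k i ≤ 0)]
        nlinarith [mul_pos hdi hdj, sq_nonneg (d k)]
      · have h2' : M j k ≤ 0 := by nlinarith
        rw [max_eq_right h1, max_eq_left (by linarith : (0:ℤ) ≤ -M i k),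
          max_eq_left (le_of_lt h2), max_eq_right (by linarith : -M k j ≤ 0),
          max_eq_right h2', max_eq_left h1',
          max_eq_left (by linarith : (0:ℤ) ≤ -M j k), max_eq_right (by linarith : -M k i ≤ 0)]
        nlinarith [mul_pos hdi hdj, sq_nonneg (d k)]
    · have h1' : M k i ≤ 0 := by nlinarith
      rcases le_or_gt (M k j) 0 with h2 | h2
      · have h2' : 0 ≤ M j k := by nlinarith
        rw [max_eq_left (le_of_lt h1), max_eq_right (by linarith : -M i k ≤ 0),
          max_eq_right h2, max_eq_left (by linarith : (0:ℤ) ≤ -M k j),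
          max_eq_left h2', max_eq_right h1',
          max_eq_right (by linarith : -M j k ≤ 0), max_eq_left (by linarith : (0:ℤ) ≤ -M k i)]
        nlinarith [mul_pos hdi hdj, sq_nonneg (d k)]
      · have h2' : M j k ≤ 0 := by nlinarith
        rw [max_eq_left (le_of_lt h1), max_eq_right (by linarith : -M i k ≤ 0),
          max_eq_left (le_of_lt h2), max_eq_right (by linarith : -M k j ≤ 0),
          max_eq_right h2', max_eq_right h1',
          max_eq_left (by linarith : (0:ℤ) ≤ -M j k), max_eq_left (by linarith : (0:ℤ) ≤ -M k i)]
        nlinarith [mul_pos hdi hdj, sq_nonneg (d k)]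
end

section
/- Let I be a finite index set, J ⊆ I, M = (M_{ij})_{i,j∈I} an integer matrix, 𝒢 an additively written abelian group, and d : I → 𝒢 a function (the degrees) such that Σ_{i∈I} M_{ij}·d_i = 0 in 𝒢 for all j ∈ J (integer multiples taken in 𝒢). Fix k ∈ J with M_{kk} = 0, and define d' : I → 𝒢 by d'_i = d_i for i ≠ k and d'_k = −d_k + Σ_{i∈I} max(M_{ik},0)·d_i. Then Σ_{i∈I} μ_k(M)_{ij}·d'_i = 0 for all j ∈ J. (This is the key step in the proof of the homogeneity criterion for graded cluster algebras: the degree-kernel condition Σ_i |z_i| M_{ij} = 0 for all j ∈ J is preserved under seed mutation, where d'_k is the common degree of the two exchange monomials.) -/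
lemma mut_coeff (a b x : ℤ) :
    (-b) * max a 0 + (x + max a 0 * max b 0 - max (-a) 0 * max (-b) 0)
      = x + (max b 0 - b) * a := by
  rcases le_total a 0 with ha | ha <;> rcases le_total b 0 with hb | hb
  · rw [max_eq_right ha, max_eq_right hb, max_eq_left (neg_nonneg.2 ha),
      max_eq_left (neg_nonneg.2 hb)]; ring
  · rw [max_eq_right ha, max_eq_left hb, max_eq_left (neg_nonneg.2 ha),
      max_eq_right (neg_nonpos.2 hb)]; ring
  · rw [max_eq_left ha, max_eq_right hb, max_eq_right (neg_nonpos.2 ha),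
      max_eq_left (neg_nonneg.2 hb)]; ring
  · rw [max_eq_left ha, max_eq_left hb, max_eq_right (neg_nonpos.2 ha),
      max_eq_right (neg_nonpos.2 hb)]; ring

/-- The key step in the homogeneity criterion for graded cluster algebras: the degree-kernel
condition `∑ i, M i j • d i = 0` (for all `j ∈ J`) is preserved under seed mutation at `k ∈ J`,
where the new degree of the mutated variable `z_k` is `-d k + ∑ i, max (M i k) 0 • d i`. -/
theorem degree_kernel_preserved_by_mutation
    {I : Type*} [Fintype I] [DecidableEq I] {G : Type*} [AddCommGroup G]
    (M : I → I → ℤ) (J : Set I) (d : I → G)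
    (hker : ∀ j ∈ J, ∑ i, M i j • d i = 0)
    (k : I) (hk : k ∈ J) (hMkk : M k k = 0) :
    ∀ j ∈ J, ∑ i, matrixMutation M k i j •
      (if i = k then -d k + ∑ i', max (M i' k) 0 • d i' else d i) = 0 := by
  intro j hj
  by_cases hkj : k = j
  · subst hkj
    have hterm : ∀ i, matrixMutation M k i k •
        (if i = k then -d k + ∑ i', max (M i' k) 0 • d i' else d i) = -(M i k • d i) := by
      intro i
      by_cases hik : i = k
      · subst hik; simp [matrixMutation, hMkk]
      · rw [if_neg hik, show matrixMutation M k i k = -M i k by simp [matrixMutation],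
          neg_smul]
    rw [Finset.sum_congr rfl fun i _ => hterm i, Finset.sum_neg_distrib, hker k hk, neg_zero]
  · -- j ≠ k
    set c : ℤ := max (M k j) 0 - M k j with hc
    have hsplit : ∀ f : I → G, ∑ i, f i = f k + ∑ i ∈ Finset.univ.erase k, f i :=
      fun f => (Finset.add_sum_erase _ f (Finset.mem_univ k)).symm
    have hmutk : matrixMutation M k k j = -M k j := by simp [matrixMutation]
    have hmut : ∀ i, i ≠ k → matrixMutation M k i j
        = M i j + max (M i k) 0 * max (M k j) 0 - max (-M i k) 0 * max (-M k j) 0 := by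
      intro i hik
      have hni : ¬(k = i ∨ k = j) := by
        rintro (h | h)
        exacts [hik h.symm, hkj h]
      simp [matrixMutation, hni]
    calc ∑ i, matrixMutation M k i j •
          (if i = k then -d k + ∑ i', max (M i' k) 0 • d i' else d i)
        = ∑ i, ((M i j + c * M i k) • d i) := by
          rw [hsplit, hsplit (fun i => (M i j + c * M i k) • d i)]
          rw [if_pos rfl, hmutk]
          have hinner : (-M k j) • (-d k + ∑ i', max (M i' k) 0 • d i')
              = M k j • d k + ∑ i ∈ Finset.univ.erase k,
                  ((-M k j) * max (M i k) 0) • d i := by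
            rw [smul_add, smul_neg, neg_smul, neg_neg, Finset.smul_sum]
            congr 1
            rw [hsplit (fun i => (-M k j) • (max (M i k) 0 • d i)), hMkk]
            simp [smul_smul]
          rw [hinner, add_assoc, ← Finset.sum_add_distrib]
          congr 1
          · rw [hMkk]; ring_nf
          · apply Finset.sum_congr rfl
            intro i hi
            have hik : i ≠ k := (Finset.mem_erase.1 hi).1
            rw [if_neg hik, hmut i hik, ← add_smul, mut_coeff (M i k) (M k j) (M i j)]
      _ = ∑ i, M i j • d i + c • ∑ i, M i k • d i := by
          rw [Finset.smul_sum, ← Finset.sum_add_distrib]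
          apply Finset.sum_congr rfl
          intro i _
          rw [add_smul, smul_smul]
      _ = 0 := by rw [hker j hj, hker k hk, smul_zero, add_zero]
end

section
/- Let I be a finite index set, J ⊆ I, 𝒢 an additively written abelian group, M = (M_{ij})_{i,j∈I} an integer matrix admitting a skew-symmetrizer (a diagonal integer matrix D = diag(d_i) with d_i > 0 and MD = −(MD)^T), and d : I → 𝒢 with Σ_{i∈I} M_{ij}·d_i = 0 for all j ∈ J. Define the mutation of the graded seed (M,d) at k ∈ J as the pair (μ_k(M), μ_k(d)), where μ_k(d)_i = d_i for i ≠ k and μ_k(d)_k = −d_k + Σ_{i∈I} max(M_{ik},0)·d_i. Then for every finite sequence k_1, …, k_s of indices in J, the pair (M', d') obtained by successively mutating (M,d) at k_1, …, k_s again satisfies Σ_{i∈I} M'_{ij}·d'_i = 0 for all j ∈ J. (This is the content of the homogeneity criterion: if the initial seed of a 𝒢-graded cluster algebra satisfies the degree-kernel condition, then every seed mutation-equivalent to it does, so all cluster variables are homogeneous.) -/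
/-- Mutation of the degree function of a graded seed at direction `k`. -/
def degreeMutation {I : Type*} [Fintype I] [DecidableEq I] {G : Type*} [AddCommGroup G]
    (M : I → I → ℤ) (d : I → G) (k : I) : I → G :=
  fun i => if i = k then -d k + ∑ i', max (M i' k) 0 • d i' else d i

/-- Mutation of a graded seed `(M, d)` at direction `k`. -/
def gradedSeedMutation {I : Type*} [Fintype I] [DecidableEq I] {G : Type*} [AddCommGroup G]
    (p : (I → I → ℤ) × (I → G)) (k : I) : (I → I → ℤ) × (I → G) :=
  (matrixMutation p.1 k, degreeMutation p.1 p.2 k)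

/-!
Write `M'`, `d'` for the mutations at `k`, and `c_j := ∑ i, M i j • d i`. As long as
`M k k = 0`, a direct computation gives `c'_k = -c_k` and `c'_j = c_j + max (-M k j) 0 • c_k`
for `j ≠ k`: the column degrees transform by an invertible matrix that only mixes in the
column `k`. So mutating at `k ∈ J` keeps `c_j = 0` for all `j ∈ J`. The hypothesis `M k k = 0`
is supplied along the whole mutation sequence by skew-symmetrizability, which mutation preserves
with the same skew-symmetrizer.
-/

theorem max_mul_max_sub_max_neg_mul_max_neg (a b : ℤ) :
    max a 0 * max b 0 - max (-a) 0 * max (-b) 0 = max (-b) 0 * a + b * max a 0 := by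
  linear_combination max (-b) 0 * max_zero_sub_max_neg_zero_eq_self a +
    max a 0 * max_zero_sub_max_neg_zero_eq_self b

section Mutation

variable {I : Type*} [DecidableEq I] (M : I → I → ℤ) {i j k : I}

@[simp]
theorem matrixMutation_self_left : matrixMutation M k k j = -M k j := by
  simp [matrixMutation]

@[simp]
theorem matrixMutation_self_right : matrixMutation M k i k = -M i k := by
  simp [matrixMutation]

theorem matrixMutation_of_ne (hi : i ≠ k) (hj : j ≠ k) :
    matrixMutation M k i j = M i j + (max (-M k j) 0 * M i k + M k j * max (M i k) 0) := by
  rw [matrixMutation, if_neg (by tauto), add_sub_assoc, max_mul_max_sub_max_neg_mul_max_neg]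

variable [Fintype I] {G : Type*} [AddCommGroup G] (d : I → G)

@[simp]
theorem degreeMutation_self : degreeMutation M d k k = -d k + ∑ i, max (M i k) 0 • d i := by
  simp [degreeMutation]

theorem degreeMutation_of_ne (hi : i ≠ k) : degreeMutation M d k i = d i := by
  simp [degreeMutation, hi]

theorem sum_matrixMutation_smul_degreeMutation_self (hkk : M k k = 0) :
    ∑ i, matrixMutation M k i k • degreeMutation M d k i = -∑ i, M i k • d i := by
  rw [← Finset.sum_neg_distrib]
  refine Fintype.sum_congr _ _ fun i => ?_
  rw [matrixMutation_self_right, neg_smul]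
  rcases eq_or_ne i k with rfl | hi
  · simp [hkk]
  · rw [degreeMutation_of_ne M d hi]

theorem sum_matrixMutation_smul_degreeMutation_of_ne (hkk : M k k = 0) (hj : j ≠ k) :
    ∑ i, matrixMutation M k i j • degreeMutation M d k i
      = ∑ i, M i j • d i + max (-M k j) 0 • ∑ i, M i k • d i := by
  have off_k : ∀ i ∈ ({k}ᶜ : Finset I), matrixMutation M k i j • degreeMutation M d k i
      = M i j • d i + max (-M k j) 0 • (M i k • d i) + M k j • (max (M i k) 0 • d i) := by
    intro i hi
    have hik : i ≠ k := by simpa using hi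
    rw [matrixMutation_of_ne M hik hj, degreeMutation_of_ne M d hik]
    module
  rw [Fintype.sum_eq_add_sum_compl k, Finset.sum_congr rfl off_k, degreeMutation_self,
    Fintype.sum_eq_add_sum_compl k (fun i => max (M i k) 0 • d i),
    Fintype.sum_eq_add_sum_compl k (fun i => M i j • d i),
    Fintype.sum_eq_add_sum_compl k (fun i => M i k • d i)]
  simp only [Finset.sum_add_distrib, ← Finset.smul_sum, matrixMutation_self_left, hkk, max_self,
    zero_smul]
  module

end Mutation

theorem sum_matrixMutation_smul_degreeMutation_eq_zero {I : Type*} [Fintype I] [DecidableEq I]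
    {G : Type*} [AddCommGroup G] {M : I → I → ℤ} {d : I → G} {J : Set I} {k : I}
    (hkk : M k k = 0) (hk : k ∈ J) (hker : ∀ j ∈ J, ∑ i, M i j • d i = 0) :
    ∀ j ∈ J, ∑ i, matrixMutation M k i j • degreeMutation M d k i = 0 := by
  intro j hj
  rcases eq_or_ne j k with rfl | hjk
  · rw [sum_matrixMutation_smul_degreeMutation_self M d hkk, hker j hj, neg_zero]
  · rw [sum_matrixMutation_smul_degreeMutation_of_ne M d hkk hjk, hker j hj, hker k hk,
      smul_zero, add_zero]

def IsSkewSymmetrizer {I : Type*} (M : I → I → ℤ) (D : I → ℤ) : Prop :=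
  (∀ i, 0 < D i) ∧ ∀ i j, M i j * D j = -(M j i * D i)

namespace IsSkewSymmetrizer

variable {I : Type*} {M : I → I → ℤ} {D : I → ℤ}

theorem apply_self_eq_zero (hD : IsSkewSymmetrizer M D) (i : I) : M i i = 0 := by
  have h := hD.2 i i
  have : M i i * D i = 0 := by linarith
  exact (mul_eq_zero.mp this).resolve_right (hD.1 i).ne'

theorem max_mul_eq_max_neg_mul (hD : IsSkewSymmetrizer M D) (i j : I) :
    max (M i j) 0 * D j = max (-M j i) 0 * D i := by
  rw [max_mul_of_nonneg _ _ (hD.1 j).le, max_mul_of_nonneg _ _ (hD.1 i).le, zero_mul, zero_mul,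
    neg_mul, hD.2]

theorem matrixMutation [DecidableEq I] (hD : IsSkewSymmetrizer M D) (k : I) :
    IsSkewSymmetrizer (matrixMutation M k) D := by
  refine ⟨hD.1, fun i j => ?_⟩
  rcases eq_or_ne i k with rfl | hi
  · simp only [matrixMutation_self_left, matrixMutation_self_right]
    linear_combination -hD.2 i j
  rcases eq_or_ne j k with rfl | hj
  · simp only [matrixMutation_self_left, matrixMutation_self_right]
    linear_combination -hD.2 i j
  rw [matrixMutation_of_ne M hi hj, matrixMutation_of_ne M hj hi]
  -- the max-terms of the two sides match via `max_mul_eq_max_neg_mul` only after scaling by `D k`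
  refine mul_right_cancel₀ (hD.1 k).ne' ?_
  linear_combination D k * hD.2 i j + max (-M k j) 0 * D j * hD.2 i k
    + M k i * D i * hD.max_mul_eq_max_neg_mul j k + M k j * D j * hD.max_mul_eq_max_neg_mul i k
    + max (-M k i) 0 * D i * hD.2 k j

end IsSkewSymmetrizer

theorem IsSkewSymmetrizer.foldl_gradedSeedMutation {I : Type*} [Fintype I] [DecidableEq I]
    {G : Type*} [AddCommGroup G] {J : Set I} {D : I → ℤ} (ks : List I)
    {p : (I → I → ℤ) × (I → G)} (hD : IsSkewSymmetrizer p.1 D)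
    (hker : ∀ j ∈ J, ∑ i, p.1 i j • p.2 i = 0) (hks : ∀ k ∈ ks, k ∈ J) :
    IsSkewSymmetrizer (ks.foldl gradedSeedMutation p).1 D ∧
      ∀ j ∈ J, ∑ i, (ks.foldl gradedSeedMutation p).1 i j •
        (ks.foldl gradedSeedMutation p).2 i = 0 := by
  induction ks generalizing p with
  | nil => exact ⟨hD, hker⟩
  | cons k ks ih =>
    exact ih (hD.matrixMutation k)
      (sum_matrixMutation_smul_degreeMutation_eq_zero (hD.apply_self_eq_zero k)
        (hks k List.mem_cons_self) hker)
      fun k' hk' => hks k' (List.mem_cons_of_mem k hk')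

/-- Homogeneity criterion for graded cluster algebras: if a skew-symmetrizable graded seed
`(M, d)` satisfies the degree-kernel condition `∑ i, M i j • d i = 0` for all `j ∈ J`, then so
does any graded seed obtained from it by a finite sequence of mutations at indices in `J`. -/
theorem degree_kernel_preserved_by_mutation_sequence
    {I : Type*} [Fintype I] [DecidableEq I] {G : Type*} [AddCommGroup G]
    (M : I → I → ℤ) (J : Set I) (d : I → G)
    (hD : ∃ d0 : I → ℤ, (∀ i, 0 < d0 i) ∧ ∀ i j, M i j * d0 j = -(M j i * d0 i))
    (hker : ∀ j ∈ J, ∑ i, M i j • d i = 0)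
    (ks : List I) (hks : ∀ k ∈ ks, k ∈ J) :
    ∀ j ∈ J, ∑ i, (ks.foldl gradedSeedMutation (M, d)).1 i j •
      (ks.foldl gradedSeedMutation (M, d)).2 i = 0 := by
  obtain ⟨D, hD⟩ := hD
  exact (IsSkewSymmetrizer.foldl_gradedSeedMutation (D := D) ks (p := (M, d)) hD hker hks).2
end

section
/- Fix integers r ≥ 1 and n ≥ 1, and let I = {−r,…,−1} ∪ {1,…,n} ⊂ ℤ. Let i : ℤ → ℤ be a function with i(−k) = k for all k ∈ {1,…,r} and |i(k)| ∈ {1,…,r} for all k ∈ {1,…,n}, let k⁺ and the I×I matrix M(A) attached to an r×r integer matrix A be defined as follows: for k ∈ I, k⁺ = min{ j : k < j ≤ n, |i(j)| = |i(k)| } (or n+1 if no such j exists); for k,l ∈ I, with p = max(k,l), q = min(k⁺,l⁺), and ε the sign function, M(A)_{kl} = −ε(k−l)·ε(i(p)) if p = q; M(A)_{kl} = −ε(k−l)·ε(i(p))·A_{|i(k)|,|i(l)|} if p < q and ε(i(p))·ε(i(q))·(k−l)·(k⁺−l⁺) > 0; and M(A)_{kl} = 0 otherwise. Suppose D = diag(d_1,…,d_r)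 is a diagonal integer matrix with positive entries such that AD is symmetric, i.e. A_{ab}·d_b = A_{ba}·d_a for all a,b ∈ {1,…,r}. Then the diagonal I×I matrix 𝐃 with entries 𝐃_{kk} = d_{|i(k)|} is a skew-symmetrizer of M(A): for all k,l ∈ I, M(A)_{kl}·d_{|i(l)|} = −M(A)_{lk}·d_{|i(k)|}. -/
/-- For `k ∈ I`, `k⁺` is the smallest index `j` with `k < j ≤ n` and `|ι j| = |ι k|`,
or `n + 1` if no such index exists. -/
noncomputable def kPlus (n : ℤ) (ι : ℤ → ℤ) (k : ℤ) : ℤ :=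
  let S := (Finset.Icc (k + 1) n).filter fun j => |ι j| = |ι k|
  if h : S.Nonempty then S.min' h else n + 1

/-- The Berenstein–Fomin–Zelevinsky seed matrix `M(𝐢)` attached to a double reduced word,
built from an `r × r` Cartan-type matrix `A`. -/
noncomputable def bfzSeedMatrix (n : ℤ) (ι : ℤ → ℤ) (A : ℤ → ℤ → ℤ) (k l : ℤ) : ℤ :=
  let p := max k l
  let q := min (kPlus n ι k) (kPlus n ι l)
  if p = q then -(k - l).sign * (ι p).sign
  else if p < q ∧ 0 < (ι p).sign * (ι q).sign * (k - l) * (kPlus n ι k - kPlus n ι l) then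
    -(k - l).sign * (ι p).sign * A |ι k| |ι l|
  else 0

/-!
The entry `M(A)_{kl}` is `-ε(k - l) ε(i(p))` times either `1`, `A_{|i(k)|,|i(l)|}` or `0`,
and which of the three cases occurs depends on `k` and `l` only symmetrically. Swapping `k`
and `l` flips `ε(k - l)`, so skew-symmetry reduces to
`A_{|i(k)|,|i(l)|} d_{|i(l)|} = A_{|i(l)|,|i(k)|} d_{|i(k)|}` in the middle case and to
`d_{|i(k)|} = d_{|i(l)|}` in the first; the latter holds because `p = q` forces `l = k⁺`
or `k = l⁺`.
-/

lemma lt_kPlus {n k : ℤ} (ι : ℤ → ℤ) (hk : k ≤ n) : k < kPlus n ι k := by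
  simp only [kPlus]
  split_ifs with hS
  · have hmem := Finset.min'_mem _ hS
    simp only [Finset.mem_filter, Finset.mem_Icc] at hmem
    omega
  · omega

lemma abs_apply_kPlus {n k : ℤ} (ι : ℤ → ℤ) (hk : kPlus n ι k ≤ n) :
    |ι (kPlus n ι k)| = |ι k| := by
  simp only [kPlus] at hk ⊢
  split_ifs at hk ⊢ with hS
  · exact (Finset.mem_filter.mp (Finset.min'_mem _ hS)).2
  · omega

lemma abs_apply_eq_of_kPlus_eq {n k l : ℤ} (ι : ℤ → ℤ) (hl : l ≤ n) (h : kPlus n ι k = l) :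
    |ι k| = |ι l| := by
  rw [← abs_apply_kPlus ι (h ▸ hl), h]

lemma abs_apply_eq_of_max_eq_min_kPlus {n k l : ℤ} (ι : ℤ → ℤ) (hk : k ≤ n) (hl : l ≤ n)
    (h : max k l = min (kPlus n ι k) (kPlus n ι l)) : |ι k| = |ι l| := by
  have hk' := lt_kPlus ι hk
  have hl' := lt_kPlus ι hl
  rcases lt_trichotomy k l with hkl | rfl | hlk
  · exact abs_apply_eq_of_kPlus_eq ι hl (by omega)
  · omega
  · exact (abs_apply_eq_of_kPlus_eq ι hk (by omega)).symm

lemma bfzSeedMatrix_mul_eq_neg {n k l : ℤ} (ι : ℤ → ℤ) (A : ℤ → ℤ → ℤ) (d : ℤ → ℤ)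
    (hk : k ≤ n) (hl : l ≤ n)
    (hsym : A |ι k| |ι l| * d |ι l| = A |ι l| |ι k| * d |ι k|) :
    bfzSeedMatrix n ι A k l * d |ι l| = -(bfzSeedMatrix n ι A l k * d |ι k|) := by
  have hsign : (l - k).sign = -(k - l).sign := by rw [← Int.sign_neg, neg_sub]
  have hprod : ∀ s : ℤ,
      s * (l - k) * (kPlus n ι l - kPlus n ι k) = s * (k - l) * (kPlus n ι k - kPlus n ι l) :=
    fun _ => by ring
  simp only [bfzSeedMatrix]
  rw [max_comm l k, min_comm (kPlus n ι l), hsign, hprod]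
  split_ifs with hpq hcond
  · rw [abs_apply_eq_of_max_eq_min_kPlus ι hk hl hpq]
    ring
  · linear_combination (-(k - l).sign * (ι (max k l)).sign) * hsym
  · ring

lemma abs_apply_mem_Icc {r n m : ℤ} {ι : ℤ → ℤ}
    (hneg : ∀ a : ℤ, 1 ≤ a → a ≤ r → ι (-a) = a)
    (hpos : ∀ j : ℤ, 1 ≤ j → j ≤ n → 1 ≤ |ι j| ∧ |ι j| ≤ r)
    (hm : (-r ≤ m ∧ m ≤ -1) ∨ (1 ≤ m ∧ m ≤ n)) : 1 ≤ |ι m| ∧ |ι m| ≤ r := by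
  rcases hm with ⟨h1, h2⟩ | ⟨h1, h2⟩
  · have h := hneg (-m) (by omega) (by omega)
    rw [neg_neg] at h
    rw [h, abs_of_nonneg (by omega)]
    omega
  · exact hpos m h1 h2

theorem bfzSeedMatrix_skew_symmetrizer_general
    (r n : ℤ) (hn : 1 ≤ n) (ι : ℤ → ℤ)
    (hneg : ∀ a : ℤ, 1 ≤ a → a ≤ r → ι (-a) = a)
    (hpos : ∀ j : ℤ, 1 ≤ j → j ≤ n → 1 ≤ |ι j| ∧ |ι j| ≤ r)
    (A : ℤ → ℤ → ℤ) (d : ℤ → ℤ)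
    (hsym : ∀ a b : ℤ, 1 ≤ a → a ≤ r → 1 ≤ b → b ≤ r → A a b * d b = A b a * d a)
    (k l : ℤ)
    (hk : (-r ≤ k ∧ k ≤ -1) ∨ (1 ≤ k ∧ k ≤ n))
    (hl : (-r ≤ l ∧ l ≤ -1) ∨ (1 ≤ l ∧ l ≤ n)) :
    bfzSeedMatrix n ι A k l * d |ι l| = -(bfzSeedMatrix n ι A l k * d |ι k|) := by
  obtain ⟨hk1, hkr⟩ := abs_apply_mem_Icc hneg hpos hk
  obtain ⟨hl1, hlr⟩ := abs_apply_mem_Icc hneg hpos hl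
  exact bfzSeedMatrix_mul_eq_neg ι A d (by omega) (by omega) (hsym _ _ hk1 hkr hl1 hlr)

/-- If `D = diag(d_1,…,d_r)` with positive integer entries symmetrizes `A`
(i.e. `A_{ab} d_b = A_{ba} d_a`), then the diagonal matrix `𝐃` with entries
`𝐃_{kk} = d_{|ι k|}` is a skew-symmetrizer of the seed matrix `M(A)`:
`M(A)_{kl} · d_{|ι l|} = -(M(A)_{lk} · d_{|ι k|})` for all `k, l` in the index set
`I = {-r,…,-1} ∪ {1,…,n}`. -/
theorem bfzSeedMatrix_skew_symmetrizer
    (r n : ℤ) (hr : 1 ≤ r) (hn : 1 ≤ n) (ι : ℤ → ℤ)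
    (hneg : ∀ a : ℤ, 1 ≤ a → a ≤ r → ι (-a) = a)
    (hpos : ∀ j : ℤ, 1 ≤ j → j ≤ n → 1 ≤ |ι j| ∧ |ι j| ≤ r)
    (A : ℤ → ℤ → ℤ) (d : ℤ → ℤ)
    (hdpos : ∀ a : ℤ, 1 ≤ a → a ≤ r → 0 < d a)
    (hsym : ∀ a b : ℤ, 1 ≤ a → a ≤ r → 1 ≤ b → b ≤ r → A a b * d b = A b a * d a)
    (k l : ℤ)
    (hk : (-r ≤ k ∧ k ≤ -1) ∨ (1 ≤ k ∧ k ≤ n))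
    (hl : (-r ≤ l ∧ l ≤ -1) ∨ (1 ≤ l ∧ l ≤ n)) :
    bfzSeedMatrix n ι A k l * d |ι l| = -(bfzSeedMatrix n ι A l k * d |ι k|) :=
  bfzSeedMatrix_skew_symmetrizer_general r n hn ι hneg hpos A d hsym k l hk hl
end
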